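/- arXiv:1611.06380 — 4 statements merged into one kernel-verified Lean document; each statement's English description precedes it below -/
import Mathlib

section
/- Let $a\in\mathcal W$ with $a'\in\mathcal W$ (i.e. $\sum_k |k a_k|<\infty$). Then for every $k\ge 1$, $\|H(a_-)H((a^{k-1})_+)\|_{\mathcal F}\le (k-1)\|a\|_{\mathcal W}^{k-2}\|a'\|_{\mathcal W}^2$. -/
open scoped BigOperators

noncomputable section

/-- The ℱ-norm of a semi-infinite matrix: sum of absolute values of all entries. -/
def Fnorm (S : ℕ → ℕ → ℂ) : ℝ := ∑' p : ℕ × ℕ, ‖S p.1 p.2‖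

/-- Membership in ℱ: absolutely summable entries. -/
def MemF (S : ℕ → ℕ → ℂ) : Prop := Summable (fun p : ℕ × ℕ => ‖S p.1 p.2‖)

/-- Product of semi-infinite matrices, entrywise by (absolutely convergent) series. -/
def matMul (A B : ℕ → ℕ → ℂ) : ℕ → ℕ → ℂ := fun i j => ∑' r : ℕ, A i r * B r j

/-- The identity semi-infinite matrix. -/
def idMat : ℕ → ℕ → ℂ := fun i j => if i = j then 1 else 0

/-- Powers of a semi-infinite matrix. -/
def matPow (A : ℕ → ℕ → ℂ) : ℕ → (ℕ → ℕ → ℂ)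
  | 0 => idMat
  | n + 1 => matMul A (matPow A n)

/-- Wiener norm: sum of moduli of the coefficients. -/
def Wnorm (a : ℤ → ℂ) : ℝ := ∑' k : ℤ, ‖a k‖

/-- Membership in the Wiener algebra. -/
def MemW (a : ℤ → ℂ) : Prop := Summable (fun k : ℤ => ‖a k‖)

/-- Wiener norm of the derivative: ∑ |k| |a_k|. -/
def Wnorm' (a : ℤ → ℂ) : ℝ := ∑' k : ℤ, |(k : ℝ)| * ‖a k‖

/-- The derivative has coefficients in the Wiener algebra. -/
def MemW' (a : ℤ → ℂ) : Prop := Summable (fun k : ℤ => |(k : ℝ)| * ‖a k‖)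

/-- The semi-infinite Toeplitz matrix of symbol `a` (0-based indexing): entry (i,j) is a_{j-i}. -/
def Toep (a : ℤ → ℂ) : ℕ → ℕ → ℂ := fun i j => a ((j : ℤ) - (i : ℤ))

/-- Hankel matrix of the strictly negative part of `a`: H(a₋), entry (i,j) = a_{-(i+j-1)} (1-based),
i.e. a_{-(i+j+1)} in 0-based indexing. -/
def Hminus (a : ℤ → ℂ) : ℕ → ℕ → ℂ := fun i j => a (-((i : ℤ) + (j : ℤ) + 1))

/-- Hankel matrix of the strictly positive part of `a`: H(a₊), entry (i,j) = a_{i+j-1} (1-based),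
i.e. a_{i+j+1} in 0-based indexing. -/
def Hplus (a : ℤ → ℂ) : ℕ → ℕ → ℂ := fun i j => a ((i : ℤ) + (j : ℤ) + 1)

/-- Product (convolution) in the Wiener algebra. -/
def convW (a b : ℤ → ℂ) : ℤ → ℂ := fun k => ∑' j : ℤ, a j * b (k - j)

/-- Powers in the Wiener algebra. -/
def powW (a : ℤ → ℂ) : ℕ → (ℤ → ℂ)
  | 0 => fun k => if k = 0 then 1 else 0
  | n + 1 => convW a (powW a n)

/-- Exponential in the Wiener algebra, coefficientwise. -/
def expW (a : ℤ → ℂ) : ℤ → ℂ := fun k => ∑' m : ℕ, (m.factorial : ℂ)⁻¹ * powW a m k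

/-!
All estimates are made in `ℝ≥0∞`, where sums can be reordered freely and
`‖∑' f‖ₑ ≤ ∑' ‖f‖ₑ` holds without any summability assumption.

The Wiener norm is submultiplicative, and since `|K| ≤ |j| + |K - j|` the norm of the derivative
satisfies the Leibniz bound `‖(ab)'‖ ≤ ‖a'‖ ‖b‖ + ‖a‖ ‖b'‖`; by induction
`‖(aⁿ)'‖ ≤ n ‖a‖ⁿ⁻¹ ‖a'‖`. For the Hankel product, entry `(i, j)` is at most
`∑ᵣ |a_{-(i+r+1)}| |b_{r+j+1}|`. Summed over `j` this gives a tail of `b`, bounded by `‖b'‖`,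
and summed over `i` and `r` the coefficient `|a_{-m}|` is counted exactly `m` times, giving `‖a'‖`.
-/

open scoped ENNReal
open Function

def eWnorm (a : ℤ → ℂ) : ℝ≥0∞ := ∑' k, ‖a k‖ₑ

def eWnorm' (a : ℤ → ℂ) : ℝ≥0∞ := ∑' k, k.natAbs * ‖a k‖ₑ

lemma ofReal_Wnorm {a : ℤ → ℂ} (ha : MemW a) : ENNReal.ofReal (Wnorm a) = eWnorm a := by
  rw [Wnorm, ENNReal.ofReal_tsum_of_nonneg (fun _ => norm_nonneg _) ha]
  simp only [ofReal_norm, eWnorm]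

lemma ofReal_Wnorm' {a : ℤ → ℂ} (ha : MemW' a) : ENNReal.ofReal (Wnorm' a) = eWnorm' a := by
  rw [Wnorm', ENNReal.ofReal_tsum_of_nonneg (fun _ => by positivity) ha]
  refine tsum_congr fun k => ?_
  rw [ENNReal.ofReal_mul (abs_nonneg _), ofReal_norm, ← ENNReal.ofReal_natCast, Nat.cast_natAbs,
    Int.cast_abs]

lemma memF_and_Fnorm_le_of_tsum_enorm_le {S : ℕ → ℕ → ℂ} {C : ℝ} (hC : 0 ≤ C)
    (h : ∑' p : ℕ × ℕ, ‖S p.1 p.2‖ₑ ≤ ENNReal.ofReal C) : MemF S ∧ Fnorm S ≤ C := by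
  have hfin : ∑' p : ℕ × ℕ, ‖S p.1 p.2‖ₑ ≠ ∞ := ne_top_of_le_ne_top ENNReal.ofReal_ne_top h
  have hS : MemF S := tsum_enorm_ne_top_iff_summable_norm.mp hfin
  refine ⟨hS, ?_⟩
  rw [← ENNReal.ofReal_le_ofReal_iff hC, Fnorm,
    ENNReal.ofReal_tsum_of_nonneg (fun _ => norm_nonneg _) hS]
  simpa only [ofReal_norm] using h

lemma enorm_convW_le (a b : ℤ → ℂ) (K : ℤ) :
    ‖convW a b K‖ₑ ≤ ∑' j, ‖a j‖ₑ * ‖b (K - j)‖ₑ := by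
  simpa only [convW, enorm_mul] using enorm_tsum_le_tsum_enorm (f := fun j => a j * b (K - j))

lemma ENNReal.tsum_tsum_mul_sub (f g : ℤ → ℝ≥0∞) :
    ∑' K, ∑' j, f j * g (K - j) = (∑' j, f j) * ∑' j, g j := by
  rw [ENNReal.tsum_comm, ← ENNReal.tsum_mul_right]
  refine tsum_congr fun j => ?_
  rw [ENNReal.tsum_mul_left]
  exact congrArg _ ((Equiv.subRight j).tsum_eq g)

lemma eWnorm_convW_le (a b : ℤ → ℂ) : eWnorm (convW a b) ≤ eWnorm a * eWnorm b :=
  calc eWnorm (convW a b) ≤ ∑' K, ∑' j, ‖a j‖ₑ * ‖b (K - j)‖ₑ :=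
        ENNReal.tsum_le_tsum (enorm_convW_le a b)
    _ = eWnorm a * eWnorm b := ENNReal.tsum_tsum_mul_sub (fun j => ‖a j‖ₑ) (fun j => ‖b j‖ₑ)

lemma eWnorm'_convW_le (a b : ℤ → ℂ) :
    eWnorm' (convW a b) ≤ eWnorm' a * eWnorm b + eWnorm a * eWnorm' b := by
  have hLeibniz (K j : ℤ) : (K.natAbs : ℝ≥0∞) * (‖a j‖ₑ * ‖b (K - j)‖ₑ) ≤
      j.natAbs * ‖a j‖ₑ * ‖b (K - j)‖ₑ + ‖a j‖ₑ * ((K - j).natAbs * ‖b (K - j)‖ₑ) := by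
    have : K.natAbs ≤ j.natAbs + (K - j).natAbs := by
      simpa using Int.natAbs_add_le j (K - j)
    calc (K.natAbs : ℝ≥0∞) * (‖a j‖ₑ * ‖b (K - j)‖ₑ)
        ≤ (j.natAbs + (K - j).natAbs : ℕ) * (‖a j‖ₑ * ‖b (K - j)‖ₑ) := by gcongr
      _ = _ := by push_cast; ring
  calc eWnorm' (convW a b)
      ≤ ∑' K, ∑' j, (K.natAbs : ℝ≥0∞) * (‖a j‖ₑ * ‖b (K - j)‖ₑ) :=
        ENNReal.tsum_le_tsum fun K => by
          rw [ENNReal.tsum_mul_left]; gcongr; exact enorm_convW_le a b K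
    _ ≤ ∑' K, ∑' j, (j.natAbs * ‖a j‖ₑ * ‖b (K - j)‖ₑ +
          ‖a j‖ₑ * ((K - j).natAbs * ‖b (K - j)‖ₑ)) :=
        ENNReal.tsum_le_tsum fun K => ENNReal.tsum_le_tsum fun j => hLeibniz K j
    _ = eWnorm' a * eWnorm b + eWnorm a * eWnorm' b := by
        simp only [ENNReal.tsum_add]
        rw [ENNReal.tsum_tsum_mul_sub (fun j => j.natAbs * ‖a j‖ₑ) (fun j => ‖b j‖ₑ),
          ENNReal.tsum_tsum_mul_sub (fun j => ‖a j‖ₑ) (fun j => j.natAbs * ‖b j‖ₑ)]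
        rfl

lemma eWnorm_powW_zero (a : ℤ → ℂ) : eWnorm (powW a 0) = 1 := by
  rw [eWnorm, tsum_eq_single 0 fun k hk => by simp [powW, hk]]
  simp [powW]

lemma eWnorm'_powW_zero (a : ℤ → ℂ) : eWnorm' (powW a 0) = 0 :=
  ENNReal.tsum_eq_zero.mpr fun k => by by_cases hk : k = 0 <;> simp [powW, hk]

lemma eWnorm_powW_le (a : ℤ → ℂ) : ∀ n, eWnorm (powW a n) ≤ eWnorm a ^ n
  | 0 => by simp [eWnorm_powW_zero]
  | n + 1 =>
    calc eWnorm (powW a (n + 1)) ≤ eWnorm a * eWnorm (powW a n) := eWnorm_convW_le _ _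
      _ ≤ eWnorm a * eWnorm a ^ n := by gcongr; exact eWnorm_powW_le a n
      _ = eWnorm a ^ (n + 1) := (pow_succ' _ _).symm

lemma eWnorm'_powW_le (a : ℤ → ℂ) :
    ∀ n : ℕ, eWnorm' (powW a n) ≤ n * eWnorm a ^ (n - 1) * eWnorm' a
  | 0 => by simp [eWnorm'_powW_zero]
  | n + 1 =>
    calc eWnorm' (powW a (n + 1))
        ≤ eWnorm' a * eWnorm (powW a n) + eWnorm a * eWnorm' (powW a n) := eWnorm'_convW_le _ _
      _ ≤ eWnorm' a * eWnorm a ^ n + eWnorm a * (n * eWnorm a ^ (n - 1) * eWnorm' a) := by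
        gcongr
        · exact eWnorm_powW_le a n
        · exact eWnorm'_powW_le a n
      _ = (n + 1 : ℕ) * eWnorm a ^ (n + 1 - 1) * eWnorm' a := by
        rcases n with _ | m
        · simp
        · simp only [add_tsub_cancel_right, pow_succ]
          push_cast
          ring

lemma ENNReal.tsum_tsum_add (f : ℕ → ℝ≥0∞) : ∑' i, ∑' j, f (i + j) = ∑' n, (n + 1) * f n := by
  rw [← ENNReal.tsum_prod, ← Finset.HasAntidiagonal.sigmaAntidiagonalEquivProd.tsum_eq,
    ENNReal.tsum_sigma']
  refine tsum_congr fun n => ?_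
  simp only [Finset.HasAntidiagonal.sigmaAntidiagonalEquivProd_apply, tsum_fintype,
    Finset.univ_eq_attach]
  rw [Finset.sum_congr rfl fun b _ => by rw [Finset.HasAntidiagonal.mem_antidiagonal.mp b.2]]
  simp [nsmul_eq_mul]

lemma tsum_tsum_enorm_neg_tail_le_eWnorm' (a : ℤ → ℂ) :
    ∑' r : ℕ, ∑' i : ℕ, ‖a (-((i : ℤ) + r + 1))‖ₑ ≤ eWnorm' a := by
  have hneg : Injective fun n : ℕ => -((n : ℤ) + 1) := fun m n h => by simpa using h
  calc ∑' r : ℕ, ∑' i : ℕ, ‖a (-((i : ℤ) + r + 1))‖ₑ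
      = ∑' r : ℕ, ∑' i : ℕ, ‖a (-(((r + i : ℕ) : ℤ) + 1))‖ₑ := by
        congr! 4 with r i
        rw [Nat.cast_add, add_comm (r : ℤ)]
    _ = ∑' n : ℕ, (n + 1) * ‖a (-((n : ℤ) + 1))‖ₑ :=
        ENNReal.tsum_tsum_add fun n => ‖a (-((n : ℤ) + 1))‖ₑ
    _ = ∑' n : ℕ, (-((n : ℤ) + 1)).natAbs * ‖a (-((n : ℤ) + 1))‖ₑ := by
        refine tsum_congr fun n => ?_
        rw [show (-((n : ℤ) + 1)).natAbs = n + 1 by omega]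
        push_cast; rfl
    _ ≤ eWnorm' a := ENNReal.tsum_comp_le_tsum_of_injective hneg fun k => k.natAbs * ‖a k‖ₑ

lemma tsum_enorm_pos_tail_le_eWnorm' (b : ℤ → ℂ) (r : ℕ) :
    ∑' j : ℕ, ‖b (r + j + 1)‖ₑ ≤ eWnorm' b := by
  have hpos : Injective fun j : ℕ => (r : ℤ) + j + 1 := fun m n h => by simpa using h
  calc ∑' j : ℕ, ‖b (r + j + 1)‖ₑ ≤ ∑' j : ℕ, ((r : ℤ) + j + 1).natAbs * ‖b (r + j + 1)‖ₑ :=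
        ENNReal.tsum_le_tsum fun j => le_mul_of_one_le_left zero_le (by norm_cast; omega)
    _ ≤ eWnorm' b := ENNReal.tsum_comp_le_tsum_of_injective hpos fun k => k.natAbs * ‖b k‖ₑ

lemma ENNReal.tsum_prod_tsum_mul {ι κ ρ : Type*} (A : ι → ρ → ℝ≥0∞) (B : ρ → κ → ℝ≥0∞) :
    ∑' p : ι × κ, ∑' r, A p.1 r * B r p.2 = ∑' r, (∑' i, A i r) * ∑' j, B r j :=
  calc ∑' p : ι × κ, ∑' r, A p.1 r * B r p.2 = ∑' i, ∑' j, ∑' r, A i r * B r j :=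
      ENNReal.tsum_prod'
    _ = ∑' i, ∑' r, ∑' j, A i r * B r j := tsum_congr fun i => ENNReal.tsum_comm
    _ = ∑' r, ∑' i, ∑' j, A i r * B r j := ENNReal.tsum_comm
    _ = ∑' r, (∑' i, A i r) * ∑' j, B r j := by
      simp only [ENNReal.tsum_mul_left, ENNReal.tsum_mul_right]

lemma tsum_enorm_matMul_Hminus_Hplus_le (a b : ℤ → ℂ) :
    ∑' p : ℕ × ℕ, ‖matMul (Hminus a) (Hplus b) p.1 p.2‖ₑ ≤ eWnorm' a * eWnorm' b :=
  calc ∑' p : ℕ × ℕ, ‖matMul (Hminus a) (Hplus b) p.1 p.2‖ₑ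
      ≤ ∑' p : ℕ × ℕ, ∑' r : ℕ, ‖a (-((p.1 : ℤ) + r + 1))‖ₑ * ‖b (r + p.2 + 1)‖ₑ :=
        ENNReal.tsum_le_tsum fun p => by
          simpa only [matMul, Hminus, Hplus, enorm_mul] using
            enorm_tsum_le_tsum_enorm (f := fun r => Hminus a p.1 r * Hplus b r p.2)
    _ = ∑' r : ℕ, (∑' i : ℕ, ‖a (-((i : ℤ) + r + 1))‖ₑ) * ∑' j : ℕ, ‖b (r + j + 1)‖ₑ :=
        ENNReal.tsum_prod_tsum_mul (fun (i r : ℕ) => ‖a (-((i : ℤ) + r + 1))‖ₑ)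
          (fun (r j : ℕ) => ‖b (r + j + 1)‖ₑ)
    _ ≤ ∑' r : ℕ, (∑' i : ℕ, ‖a (-((i : ℤ) + r + 1))‖ₑ) * eWnorm' b := by
        gcongr with r; exact tsum_enorm_pos_tail_le_eWnorm' b r
    _ = (∑' r : ℕ, ∑' i : ℕ, ‖a (-((i : ℤ) + r + 1))‖ₑ) * eWnorm' b := ENNReal.tsum_mul_right
    _ ≤ eWnorm' a * eWnorm' b := by gcongr; exact tsum_tsum_enorm_neg_tail_le_eWnorm' a

theorem stmt8 (a : ℤ → ℂ) (ha : MemW a) (ha' : MemW' a) (k : ℕ) (hk : 1 ≤ k) :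
    MemF (matMul (Hminus a) (Hplus (powW a (k - 1)))) ∧
    Fnorm (matMul (Hminus a) (Hplus (powW a (k - 1)))) ≤
      ((k : ℝ) - 1) * Wnorm a ^ (k - 2) * Wnorm' a ^ 2 := by
  have hk_sub : ((k : ℝ) - 1) = ((k - 1 : ℕ) : ℝ) := by rw [Nat.cast_sub hk, Nat.cast_one]
  have hWa : 0 ≤ Wnorm a := tsum_nonneg fun _ => norm_nonneg _
  have hWa' : 0 ≤ Wnorm' a := tsum_nonneg fun _ => by positivity
  refine memF_and_Fnorm_le_of_tsum_enorm_le (by rw [hk_sub]; positivity) ?_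
  calc ∑' p : ℕ × ℕ, ‖matMul (Hminus a) (Hplus (powW a (k - 1))) p.1 p.2‖ₑ
      ≤ eWnorm' a * eWnorm' (powW a (k - 1)) := tsum_enorm_matMul_Hminus_Hplus_le _ _
    _ ≤ eWnorm' a * ((k - 1 : ℕ) * eWnorm a ^ (k - 1 - 1) * eWnorm' a) := by
        gcongr; exact eWnorm'_powW_le a (k - 1)
    _ = ENNReal.ofReal (((k : ℝ) - 1) * Wnorm a ^ (k - 2) * Wnorm' a ^ 2) := by
        rw [hk_sub, ENNReal.ofReal_mul (by positivity), ENNReal.ofReal_mul (by positivity),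
          ENNReal.ofReal_pow hWa, ENNReal.ofReal_pow hWa',
          ENNReal.ofReal_natCast, ofReal_Wnorm ha, ofReal_Wnorm' ha',
          show k - 1 - 1 = k - 2 by omega]
        ring
end
end

section
/- Let $a\in\mathcal W$ and $E_i=T(a)^i-T(a^i)$. Then for every $i\ge 1$ and every $1\le p\le\infty$, $\|E_i\|_p\le (i-1)\|a\|_{\mathcal W}^i$. -/
/-!
By Schur's test, a matrix whose absolute row and column sums are all at most `C` acts on every
`ℓ^p`, `1 ≤ p ≤ ∞`, with norm at most `C`; this bound is submultiplicative, and `T(a)`, `H(a₋)`,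
`H(a₊)` all satisfy it with `C = ‖a‖_W`. Widom's identity `T(a)T(b) - T(ab) = -H(a₋)H(b₊)` gives
`E_{i+1} = T(a) E_i - H(a₋)H((a^i)₊)`, hence `‖E_{i+1}‖ ≤ ‖a‖_W ‖E_i‖ + ‖a‖_W^{i+1}`, and `E_1 = 0`.
-/

open scoped BigOperators

noncomputable section

section DoubleSeries

variable {ι κ : Type*}

theorem summable_tsum_mul_and_le {x : κ → ℝ} {y : ι → κ → ℝ} {Cy : ℝ}
    (hx : ∀ r, 0 ≤ x r) (hy : ∀ n r, 0 ≤ y n r) (hxs : Summable x)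
    (hys : ∀ r, Summable fun n => y n r) (hyC : ∀ r, ∑' n, y n r ≤ Cy) :
    (Summable fun n => ∑' r, x r * y n r) ∧ ∑' n, ∑' r, x r * y n r ≤ (∑' r, x r) * Cy := by
  have hy_le : ∀ u : Finset ι, ∀ r, ∑ n ∈ u, y n r ≤ Cy := fun u r =>
    (hys r).sum_le_tsum u (fun n _ => hy n r) |>.trans (hyC r)
  have hrow : ∀ n, Summable fun r => x r * y n r := fun n =>
    (hxs.mul_right Cy).of_nonneg_of_le (fun r => mul_nonneg (hx r) (hy n r))
      fun r => mul_le_mul_of_nonneg_left (by simpa using hy_le {n} r) (hx r)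
  have hpartial : ∀ u : Finset ι, ∑ n ∈ u, ∑' r, x r * y n r ≤ (∑' r, x r) * Cy := by
    intro u
    rw [← Summable.tsum_finsetSum fun n _ => hrow n, ← tsum_mul_right]
    refine Summable.tsum_le_tsum (fun r => ?_) (summable_sum fun n _ => hrow n)
      (hxs.mul_right Cy)
    rw [← Finset.mul_sum]
    exact mul_le_mul_of_nonneg_left (hy_le u r) (hx r)
  have hnonneg : 0 ≤ fun n => ∑' r, x r * y n r := fun n =>
    tsum_nonneg fun r => mul_nonneg (hx r) (hy n r)
  exact ⟨summable_of_sum_le hnonneg hpartial, Real.tsum_le_of_sum_le hnonneg hpartial⟩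

theorem summable_norm_and_tsum_le_of_norm_le_tsum_mul {E : Type*} [SeminormedAddCommGroup E]
    {f : ι → E} {x : κ → ℝ} {y : ι → κ → ℝ} {Cy : ℝ}
    (hx : ∀ r, 0 ≤ x r) (hy : ∀ n r, 0 ≤ y n r) (hxs : Summable x)
    (hys : ∀ r, Summable fun n => y n r) (hyC : ∀ r, ∑' n, y n r ≤ Cy)
    (hf : ∀ n, ‖f n‖ ≤ ∑' r, x r * y n r) :
    (Summable fun n => ‖f n‖) ∧ ∑' n, ‖f n‖ ≤ (∑' r, x r) * Cy := by
  obtain ⟨hs, hle⟩ := summable_tsum_mul_and_le hx hy hxs hys hyC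
  have hfs : Summable fun n => ‖f n‖ := hs.of_nonneg_of_le (fun n => norm_nonneg _) hf
  exact ⟨hfs, (hfs.tsum_le_tsum hf hs).trans hle⟩

theorem rpow_tsum_mul_le {w f : κ → ℝ} {C t : ℝ} (ht : 1 ≤ t) (hw : ∀ n, 0 ≤ w n)
    (hf : ∀ n, 0 ≤ f n) (hws : Summable w) (hwC : ∑' n, w n ≤ C)
    (hwft : Summable fun n => w n * f n ^ t) :
    (∑' n, w n * f n) ^ t ≤ C ^ (t - 1) * ∑' n, w n * f n ^ t := by
  set S := ∑' n, w n * f n ^ t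
  have ht0 : 0 < t := zero_lt_one.trans_le ht
  have hC : 0 ≤ C := (tsum_nonneg hw).trans hwC
  have hwft0 : ∀ n, 0 ≤ w n * f n ^ t := fun n => mul_nonneg (hw n) (Real.rpow_nonneg (hf n) t)
  have hS : 0 ≤ S := tsum_nonneg hwft0
  have hholder : ∀ u : Finset κ, ∑ n ∈ u, w n * f n ≤ C ^ (1 - t⁻¹) * S ^ t⁻¹ := by
    intro u
    have : 0 ≤ 1 - t⁻¹ := sub_nonneg.2 (inv_le_one_of_one_le₀ ht)
    have : ∑ n ∈ u, w n ≤ C := (hws.sum_le_tsum u fun n _ => hw n).trans hwC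
    have : ∑ n ∈ u, w n * f n ^ t ≤ S := hwft.sum_le_tsum u fun n _ => hwft0 n
    refine (Real.inner_le_weight_mul_Lp_of_nonneg u ht w f hw hf).trans ?_
    gcongr
    · exact Real.rpow_nonneg (Finset.sum_nonneg fun n _ => hwft0 n) _
    · exact Finset.sum_nonneg fun n _ => hw n
    · exact Finset.sum_nonneg fun n _ => hwft0 n
  have hsum : ∑' n, w n * f n ≤ C ^ (1 - t⁻¹) * S ^ t⁻¹ :=
    Real.tsum_le_of_sum_le (fun n => mul_nonneg (hw n) (hf n)) hholder
  calc (∑' n, w n * f n) ^ t ≤ (C ^ (1 - t⁻¹) * S ^ t⁻¹) ^ t :=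
        Real.rpow_le_rpow (tsum_nonneg fun n => mul_nonneg (hw n) (hf n)) hsum ht0.le
    _ = C ^ (t - 1) * S := by
        rw [Real.mul_rpow (by positivity) (by positivity), ← Real.rpow_mul hC,
          ← Real.rpow_mul hS, inv_mul_cancel₀ ht0.ne', Real.rpow_one]
        congr 2
        field_simp

end DoubleSeries

structure SchurBounded (K : ℕ → ℕ → ℂ) (C : ℝ) : Prop where
  summable_row : ∀ m, Summable fun n => ‖K m n‖
  summable_col : ∀ n, Summable fun m => ‖K m n‖
  tsum_row_le : ∀ m, ∑' n, ‖K m n‖ ≤ C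
  tsum_col_le : ∀ n, ∑' m, ‖K m n‖ ≤ C

namespace SchurBounded

variable {A B K : ℕ → ℕ → ℂ} {C D : ℝ}

theorem norm_apply_le (hK : SchurBounded K C) (m n : ℕ) : ‖K m n‖ ≤ C :=
  ((hK.summable_row m).le_tsum n fun _ _ => norm_nonneg _).trans (hK.tsum_row_le m)

theorem nonneg (hK : SchurBounded K C) : 0 ≤ C :=
  (norm_nonneg _).trans (hK.norm_apply_le 0 0)

theorem mono (hK : SchurBounded K C) (h : C ≤ D) : SchurBounded K D :=
  ⟨hK.summable_row, hK.summable_col, fun m => (hK.tsum_row_le m).trans h,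
    fun n => (hK.tsum_col_le n).trans h⟩

theorem zero : SchurBounded 0 0 :=
  ⟨fun _ => by simp, fun _ => by simp, fun _ => by simp, fun _ => by simp⟩

theorem neg (hK : SchurBounded K C) : SchurBounded (-K) C := by
  refine ⟨fun m => ?_, fun n => ?_, fun m => ?_, fun n => ?_⟩ <;>
    simp only [Pi.neg_apply, norm_neg]
  exacts [hK.summable_row m, hK.summable_col n, hK.tsum_row_le m, hK.tsum_col_le n]

theorem add (hA : SchurBounded A C) (hB : SchurBounded B D) : SchurBounded (A + B) (C + D) := by
  have hle : ∀ m n, ‖(A + B) m n‖ ≤ ‖A m n‖ + ‖B m n‖ := fun m n => norm_add_le _ _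
  have hrow : ∀ m, Summable fun n => ‖A m n‖ + ‖B m n‖ := fun m =>
    (hA.summable_row m).add (hB.summable_row m)
  have hcol : ∀ n, Summable fun m => ‖A m n‖ + ‖B m n‖ := fun n =>
    (hA.summable_col n).add (hB.summable_col n)
  refine ⟨fun m => (hrow m).of_nonneg_of_le (fun _ => norm_nonneg _) (hle m),
    fun n => (hcol n).of_nonneg_of_le (fun _ => norm_nonneg _) (hle · n), fun m => ?_, fun n => ?_⟩
  · calc ∑' n, ‖(A + B) m n‖ ≤ ∑' n, (‖A m n‖ + ‖B m n‖) :=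
          ((hrow m).of_nonneg_of_le (fun _ => norm_nonneg _) (hle m)).tsum_le_tsum (hle m) (hrow m)
      _ ≤ C + D := by
          rw [(hA.summable_row m).tsum_add (hB.summable_row m)]
          exact add_le_add (hA.tsum_row_le m) (hB.tsum_row_le m)
  · calc ∑' m, ‖(A + B) m n‖ ≤ ∑' m, (‖A m n‖ + ‖B m n‖) :=
          ((hcol n).of_nonneg_of_le (fun _ => norm_nonneg _) (hle · n)).tsum_le_tsum (hle · n)
            (hcol n)
      _ ≤ C + D := by
          rw [(hA.summable_col n).tsum_add (hB.summable_col n)]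
          exact add_le_add (hA.tsum_col_le n) (hB.tsum_col_le n)

theorem summable_norm_mul_apply (hA : SchurBounded A C) (hB : SchurBounded B D) (m n : ℕ) :
    Summable fun r => ‖A m r * B r n‖ := by
  refine ((hA.summable_row m).mul_right D).of_nonneg_of_le (fun _ => norm_nonneg _) fun r => ?_
  rw [norm_mul]
  exact mul_le_mul_of_nonneg_left (hB.norm_apply_le r n) (norm_nonneg _)

theorem norm_matMul_apply_le (hA : SchurBounded A C) (hB : SchurBounded B D) (m n : ℕ) :
    ‖matMul A B m n‖ ≤ ∑' r, ‖A m r‖ * ‖B r n‖ :=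
  (norm_tsum_le_tsum_norm (hA.summable_norm_mul_apply hB m n)).trans_eq
    (tsum_congr fun _ => norm_mul _ _)

theorem mul (hA : SchurBounded A C) (hB : SchurBounded B D) :
    SchurBounded (matMul A B) (C * D) := by
  have hrow := fun m => summable_norm_and_tsum_le_of_norm_le_tsum_mul
    (fun _ => norm_nonneg _) (fun _ _ => norm_nonneg _) (hA.summable_row m)
    hB.summable_row hB.tsum_row_le (hA.norm_matMul_apply_le hB m)
  have hcol := fun n => summable_norm_and_tsum_le_of_norm_le_tsum_mul
    (f := fun m => matMul A B m n) (fun _ => norm_nonneg _) (fun _ _ => norm_nonneg _)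
    (hB.summable_col n) hA.summable_col hA.tsum_col_le
    fun m => (hA.norm_matMul_apply_le hB m n).trans_eq (tsum_congr fun _ => mul_comm _ _)
  refine ⟨fun m => (hrow m).1, fun n => (hcol n).1, fun m => (hrow m).2.trans ?_,
    fun n => (hcol n).2.trans ?_⟩
  · exact mul_le_mul_of_nonneg_right (hA.tsum_row_le m) hB.nonneg
  · rw [mul_comm C]
    exact mul_le_mul_of_nonneg_right (hB.tsum_col_le n) hA.nonneg

end SchurBounded

theorem matMul_add {A B B' : ℕ → ℕ → ℂ} {C D D' : ℝ} (hA : SchurBounded A C)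
    (hB : SchurBounded B D) (hB' : SchurBounded B' D') :
    matMul A (B + B') = matMul A B + matMul A B' := by
  ext m n
  simp only [matMul, Pi.add_apply, mul_add]
  exact ((hA.summable_norm_mul_apply hB m n).of_norm).tsum_add
    (hA.summable_norm_mul_apply hB' m n).of_norm

namespace SchurBounded

open scoped ENNReal

variable {K : ℕ → ℕ → ℂ} {C : ℝ} {p : ℝ≥0∞}

theorem summable_norm_mul_norm_lp (hK : SchurBounded K C) (hp : p ≠ 0)
    (v : lp (fun _ : ℕ => ℂ) p) (m : ℕ) : Summable fun n => ‖K m n‖ * ‖v n‖ :=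
  ((hK.summable_row m).mul_right ‖v‖).of_nonneg_of_le (fun _ => by positivity)
    fun n => mul_le_mul_of_nonneg_left (lp.norm_apply_le_norm hp v n) (norm_nonneg _)

theorem norm_tsum_mul_lp_le (hK : SchurBounded K C) (hp : p ≠ 0) (v : lp (fun _ : ℕ => ℂ) p)
    (m : ℕ) : ‖∑' n, K m n * v n‖ ≤ ∑' n, ‖K m n‖ * ‖v n‖ :=
  (norm_tsum_le_tsum_norm
    (by simpa only [norm_mul] using hK.summable_norm_mul_norm_lp hp v m)).trans_eq
      (tsum_congr fun _ => norm_mul _ _)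

theorem norm_tsum_mul_lp_le_mul_norm (hK : SchurBounded K C) (hp : p ≠ 0)
    (v : lp (fun _ : ℕ => ℂ) p) (m : ℕ) : ‖∑' n, K m n * v n‖ ≤ C * ‖v‖ :=
  calc ‖∑' n, K m n * v n‖ ≤ ∑' n, ‖K m n‖ * ‖v n‖ := hK.norm_tsum_mul_lp_le hp v m
    _ ≤ ∑' n, ‖K m n‖ * ‖v‖ :=
        (hK.summable_norm_mul_norm_lp hp v m).tsum_le_tsum
          (fun n => mul_le_mul_of_nonneg_left (lp.norm_apply_le_norm hp v n) (norm_nonneg _))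
          ((hK.summable_row m).mul_right _)
    _ ≤ C * ‖v‖ := by
        rw [tsum_mul_right]
        exact mul_le_mul_of_nonneg_right (hK.tsum_row_le m) (lp.norm_nonneg' v)

theorem summable_and_tsum_rpow_le [Fact (1 ≤ p)] (hK : SchurBounded K C) (hp : p ≠ ∞)
    (v : lp (fun _ : ℕ => ℂ) p) :
    (Summable fun m => ‖∑' n, K m n * v n‖ ^ p.toReal) ∧
      ∑' m, ‖∑' n, K m n * v n‖ ^ p.toReal ≤ (C * ‖v‖) ^ p.toReal := by
  set t := p.toReal
  have hp0 : p ≠ 0 := (zero_lt_one.trans_le Fact.out).ne'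
  have ht : 1 ≤ t := by simpa using ENNReal.toReal_mono hp (Fact.out : 1 ≤ p)
  have hC := hK.nonneg
  have hv_le : ∀ n, ‖v n‖ ^ t ≤ ‖v‖ ^ t := fun n =>
    Real.rpow_le_rpow (norm_nonneg _) (lp.norm_apply_le_norm hp0 v n) (by positivity)
  obtain ⟨hS, hS_le⟩ := summable_tsum_mul_and_le (x := fun n => ‖v n‖ ^ t)
    (y := fun m n => ‖K m n‖) (fun _ => by positivity) (fun _ _ => norm_nonneg _)
    ((lp.memℓp v).summable (by positivity)) hK.summable_col hK.tsum_col_le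
  rw [← lp.norm_rpow_eq_tsum (by positivity)] at hS_le
  have hpoint : ∀ m, ‖∑' n, K m n * v n‖ ^ t ≤ C ^ (t - 1) * ∑' n, ‖v n‖ ^ t * ‖K m n‖ := by
    intro m
    simp only [mul_comm (‖v _‖ ^ t)]
    refine (Real.rpow_le_rpow (norm_nonneg _) (hK.norm_tsum_mul_lp_le hp0 v m)
      (by positivity)).trans ?_
    refine rpow_tsum_mul_le ht (fun _ => norm_nonneg _) (fun _ => norm_nonneg _)
      (hK.summable_row m) (hK.tsum_row_le m) ?_
    exact ((hK.summable_row m).mul_right (‖v‖ ^ t)).of_nonneg_of_le (fun _ => by positivity)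
      fun n => mul_le_mul_of_nonneg_left (hv_le n) (norm_nonneg _)
  have hsum := hS.mul_left (C ^ (t - 1))
  refine ⟨hsum.of_nonneg_of_le (fun _ => by positivity) hpoint, ?_⟩
  calc ∑' m, ‖∑' n, K m n * v n‖ ^ t ≤ ∑' m, C ^ (t - 1) * ∑' n, ‖v n‖ ^ t * ‖K m n‖ :=
        (hsum.of_nonneg_of_le (fun _ => by positivity) hpoint).tsum_le_tsum hpoint hsum
    _ ≤ C ^ (t - 1) * (‖v‖ ^ t * C) := by
        rw [tsum_mul_left]
        exact mul_le_mul_of_nonneg_left hS_le (by positivity)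
    _ = (C * ‖v‖) ^ t := by
        rw [Real.mul_rpow hC (norm_nonneg v), ← mul_assoc, mul_comm _ (‖v‖ ^ t), mul_assoc,
          ← Real.rpow_add_one' hC (by linarith), sub_add_cancel, mul_comm]

theorem exists_mem_lp_norm_le [Fact (1 ≤ p)] (hK : SchurBounded K C)
    (v : lp (fun _ : ℕ => ℂ) p) :
    ∃ hw : (fun m => ∑' n, K m n * v n) ∈ lp (fun _ : ℕ => ℂ) p,
      ‖(⟨_, hw⟩ : lp (fun _ : ℕ => ℂ) p)‖ ≤ C * ‖v‖ := by
  have hp0 : p ≠ 0 := (zero_lt_one.trans_le Fact.out).ne'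
  have hCv : 0 ≤ C * ‖v‖ := mul_nonneg hK.nonneg (norm_nonneg v)
  rcases eq_or_ne p ∞ with rfl | hp
  · have hbound := hK.norm_tsum_mul_lp_le_mul_norm hp0 v
    exact ⟨memℓp_infty ⟨C * ‖v‖, by rintro _ ⟨m, rfl⟩; exact hbound m⟩,
      lp.norm_le_of_forall_le hCv hbound⟩
  · obtain ⟨hs, hle⟩ := hK.summable_and_tsum_rpow_le hp v
    exact ⟨memℓp_gen hs, lp.norm_le_of_tsum_le (ENNReal.toReal_pos hp0 hp) hCv hle⟩

end SchurBounded

section Wiener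

variable {a b : ℤ → ℂ}

theorem MemW.tsum_comp_le {ι : Type*} (ha : MemW a) {e : ι → ℤ} (he : Function.Injective e) :
    ∑' n, ‖a (e n)‖ ≤ Wnorm a :=
  Summable.tsum_le_tsum_of_inj e he (fun _ _ => norm_nonneg _) (fun _ => le_rfl)
    (ha.comp_injective he) ha

theorem MemW.schurBounded_comp (ha : MemW a) {e : ℕ → ℕ → ℤ}
    (hrow : ∀ m, Function.Injective (e m)) (hcol : ∀ n, Function.Injective fun m => e m n) :
    SchurBounded (fun m n => a (e m n)) (Wnorm a) :=
  ⟨fun m => ha.comp_injective (hrow m), fun n => ha.comp_injective (hcol n),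
    fun m => ha.tsum_comp_le (hrow m), fun n => ha.tsum_comp_le (hcol n)⟩

theorem MemW.schurBounded_toep (ha : MemW a) : SchurBounded (Toep a) (Wnorm a) :=
  ha.schurBounded_comp (fun _ _ _ h => by simpa using h) (fun _ _ _ h => by simpa using h)

theorem MemW.schurBounded_hminus (ha : MemW a) : SchurBounded (Hminus a) (Wnorm a) :=
  ha.schurBounded_comp (fun _ _ _ h => by simpa using h) (fun _ _ _ h => by simpa using h)

theorem MemW.schurBounded_hplus (ha : MemW a) : SchurBounded (Hplus a) (Wnorm a) :=
  ha.schurBounded_comp (fun _ _ _ h => by simpa using h) (fun _ _ _ h => by simpa using h)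

theorem MemW.summable_norm_mul_comp_sub (ha : MemW a) (hb : MemW b) (k : ℤ) :
    Summable fun j => ‖a j * b (k - j)‖ :=
  (ha.mul_right (Wnorm b)).of_nonneg_of_le (fun _ => norm_nonneg _) fun j => by
    rw [norm_mul]
    exact mul_le_mul_of_nonneg_left (hb.le_tsum (k - j) fun _ _ => norm_nonneg _) (norm_nonneg _)

theorem MemW.conv (ha : MemW a) (hb : MemW b) :
    MemW (convW a b) ∧ Wnorm (convW a b) ≤ Wnorm a * Wnorm b :=
  summable_norm_and_tsum_le_of_norm_le_tsum_mul (fun _ => norm_nonneg _)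
    (fun _ _ => norm_nonneg _) ha (fun j => hb.comp_injective (sub_left_injective (b := j)))
    (fun j => hb.tsum_comp_le (sub_left_injective (b := j)))
    fun k => (norm_tsum_le_tsum_norm (ha.summable_norm_mul_comp_sub hb k)).trans_eq
      (tsum_congr fun _ => norm_mul _ _)

theorem MemW.pow (ha : MemW a) : ∀ i, MemW (powW a i) ∧ Wnorm (powW a i) ≤ Wnorm a ^ i
  | 0 => by simpa [MemW, Wnorm, powW, apply_ite] using (hasSum_ite_eq (0 : ℤ) (1 : ℝ)).summable
  | i + 1 => by
    obtain ⟨hmem, hle⟩ := ha.conv (ha.pow i).1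
    refine ⟨hmem, hle.trans ?_⟩
    rw [pow_succ']
    exact mul_le_mul_of_nonneg_left (ha.pow i).2 (tsum_nonneg fun _ => norm_nonneg _)

end Wiener

theorem matMul_idMat (A : ℕ → ℕ → ℂ) : matMul A idMat = A := by
  ext m n
  exact (tsum_eq_single n fun r hr => by simp [idMat, hr]).trans (by simp [idMat])

theorem powW_one (a : ℤ → ℂ) : powW a 1 = a := by
  ext k
  exact (tsum_eq_single k fun j hj => by simp [powW, sub_eq_zero, Ne.symm hj]).trans
    (by simp [powW])

theorem matMul_toep_sub_toep_conv {a b : ℤ → ℂ} (ha : MemW a) (hb : MemW b) :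
    matMul (Toep a) (Toep b) - Toep (convW a b) = -matMul (Hminus a) (Hplus b) := by
  ext m n
  -- `T(ab)_{mn}` is a sum over all `r : ℤ`; the terms with `r ≥ 0` make up `(T(a)T(b))_{mn}`.
  set h : ℤ → ℂ := fun j => a j * b ((n - m : ℤ) - j)
  set g : ℤ → ℂ := fun r => h (r - m)
  have hg : Summable g :=
    (Equiv.subRight (m : ℤ)).summable_iff.2 (ha.summable_norm_mul_comp_sub hb _).of_norm
  have hconv : Toep (convW a b) m n = (∑' r : ℕ, g r) + ∑' s : ℕ, g (-(s + 1)) := by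
    rw [← tsum_of_nat_of_neg_add_one (hg.comp_injective Nat.cast_injective)
      (hg.comp_injective fun s t hst => by simpa using hst)]
    exact ((Equiv.subRight (m : ℤ)).tsum_eq h).symm
  have hpos : matMul (Toep a) (Toep b) m n = ∑' r : ℕ, g r :=
    tsum_congr fun r => by simp only [Toep, g, h, sub_sub_sub_cancel_right]
  have hneg : matMul (Hminus a) (Hplus b) m n = ∑' s : ℕ, g (-(s + 1)) :=
    tsum_congr fun s => by simp only [Hminus, Hplus, g, h]; congr 2 <;> ring
  simp only [Pi.sub_apply, Pi.neg_apply, hpos, hneg, hconv]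
  ring

theorem schurBounded_matPow_toep_sub_toep_powW {a : ℤ → ℂ} (ha : MemW a) (i : ℕ) :
    SchurBounded (matPow (Toep a) (i + 1) - Toep (powW a (i + 1))) (i * Wnorm a ^ (i + 1)) := by
  induction i with
  | zero =>
    have hE : matPow (Toep a) 1 - Toep (powW a 1) = 0 := by
      rw [powW_one, sub_eq_zero]
      exact matMul_idMat _
    simpa [hE] using SchurBounded.zero
  | succ i ih =>
    have hT := ha.schurBounded_toep
    obtain ⟨hpow, hpow_le⟩ := ha.pow (i + 1)
    have hrec : matPow (Toep a) (i + 2) - Toep (powW a (i + 2)) =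
        matMul (Toep a) (matPow (Toep a) (i + 1) - Toep (powW a (i + 1))) +
          -matMul (Hminus a) (Hplus (powW a (i + 1))) := by
      rw [← matMul_toep_sub_toep_conv ha hpow, ← add_sub_assoc,
        ← matMul_add hT ih hpow.schurBounded_toep, sub_add_cancel]
      rfl
    rw [hrec]
    refine ((hT.mul ih).add (ha.schurBounded_hminus.mul hpow.schurBounded_hplus).neg).mono ?_
    have := mul_le_mul_of_nonneg_left hpow_le hT.nonneg
    push_cast
    linear_combination this

/-- `‖E_i‖_p ≤ (i-1) ‖a‖_W^i` where `E_i = T(a)^i - T(a^i)`, as an operator on `ℓ^p`. -/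
theorem stmt10 (p : ENNReal) [Fact (1 ≤ p)] (a : ℤ → ℂ) (ha : MemW a)
    (i : ℕ) (hi : 1 ≤ i) (v : lp (fun _ : ℕ => ℂ) p) :
    ∃ hw : (fun i' : ℕ =>
        ∑' j : ℕ, (matPow (Toep a) i - Toep (powW a i)) i' j * (v : ℕ → ℂ) j) ∈
        lp (fun _ : ℕ => ℂ) p,
      ‖(⟨_, hw⟩ : lp (fun _ : ℕ => ℂ) p)‖ ≤ ((i : ℝ) - 1) * Wnorm a ^ i * ‖v‖ := by
  obtain ⟨k, rfl⟩ := Nat.exists_eq_add_of_le' hi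
  have hE := schurBounded_matPow_toep_sub_toep_powW ha k
  rw [Nat.cast_add_one, add_sub_cancel_right]
  exact hE.exists_mem_lp_norm_le v
end
end

section
/- Let $a\in\mathcal W$ with $a'\in\mathcal W$, and $E_i=T(a)^i-T(a^i)$. Then for every $i\ge 0$, $\|E_i\|_{\mathcal F}\le \frac{i(i-1)}2 \|a'\|_{\mathcal W}^2\|a\|_{\mathcal W}^{i-2}$ (for $i\ge 2$; and $E_0=E_1=0$). In particular each $E_i\in\mathcal F$. -/
open scoped BigOperators

noncomputable section

/-!
Widom's identity `T(ab) = T(a)T(b) + H(a₋)H(b₊)` gives the recursion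
`E_{n+1} = T(a) E_n - H(a₋) H((aⁿ)₊)`. Since `‖T(a) B‖_ℱ ≤ ‖a‖_W ‖B‖_ℱ`,
`‖H(a₋) H(b₊)‖_ℱ ≤ ‖a'‖_W ‖b'‖_W` and, by the Leibniz rule, `‖(aⁿ)'‖_W ≤ n ‖a'‖_W ‖a‖_W^{n-1}`,
the numbers `e_n = ‖E_n‖_ℱ` satisfy `e_{n+1} ≤ ‖a‖_W e_n + n ‖a'‖_W² ‖a‖_W^{n-1}`,
which is solved by `e_n ≤ (n choose 2) ‖a'‖_W² ‖a‖_W^{n-2}`.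

All norms are taken in `ℝ≥0∞`, so that they make sense without summability assumptions;
finiteness is needed only to split the series defining matrix products.
-/

open scoped ENNReal

namespace WienerToeplitz

def wnormE (a : ℤ → ℂ) : ℝ≥0∞ := ∑' k, ‖a k‖ₑ

def wnormE' (a : ℤ → ℂ) : ℝ≥0∞ := ∑' k, (k.natAbs : ℝ≥0∞) * ‖a k‖ₑ

def fnormE (S : ℕ → ℕ → ℂ) : ℝ≥0∞ := ∑' p : ℕ × ℕ, ‖S p.1 p.2‖ₑ

/-- The matrix `E_n = T(a)ⁿ - T(aⁿ)`. -/
def powDefect (a : ℤ → ℂ) (n : ℕ) : ℕ → ℕ → ℂ := matPow (Toep a) n - Toep (powW a n)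

lemma natAbs_mul_enorm (k : ℤ) (z : ℂ) :
    (k.natAbs : ℝ≥0∞) * ‖z‖ₑ = ENNReal.ofReal (|(k : ℝ)| * ‖z‖) := by
  rw [ENNReal.ofReal_mul (abs_nonneg _), ofReal_norm, ← Int.cast_abs, ← Nat.cast_natAbs,
    ENNReal.ofReal_natCast]

lemma wnormE_ne_top {a : ℤ → ℂ} (ha : MemW a) : wnormE a ≠ ⊤ :=
  tsum_enorm_ne_top_iff_summable_norm.mpr ha

lemma wnormE'_ne_top {a : ℤ → ℂ} (ha' : MemW' a) : wnormE' a ≠ ⊤ := by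
  simp only [wnormE', natAbs_mul_enorm]
  rw [← ENNReal.ofReal_tsum_of_nonneg (fun k => by positivity) ha']
  exact ENNReal.ofReal_ne_top

lemma toReal_wnormE (a : ℤ → ℂ) : (wnormE a).toReal = Wnorm a := by
  simp only [wnormE, Wnorm, ENNReal.tsum_toReal_eq fun _ => enorm_ne_top, toReal_enorm]

lemma toReal_wnormE' (a : ℤ → ℂ) : (wnormE' a).toReal = Wnorm' a := by
  simp only [wnormE', Wnorm', natAbs_mul_enorm,
    ENNReal.tsum_toReal_eq fun _ => ENNReal.ofReal_ne_top]
  exact tsum_congr fun k => ENNReal.toReal_ofReal (by positivity)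

lemma toReal_fnormE (S : ℕ → ℕ → ℂ) : (fnormE S).toReal = Fnorm S := by
  simp only [fnormE, Fnorm, ENNReal.tsum_toReal_eq fun _ => enorm_ne_top, toReal_enorm]

lemma memF_of_fnormE_ne_top {S : ℕ → ℕ → ℂ} (h : fnormE S ≠ ⊤) : MemF S :=
  tsum_enorm_ne_top_iff_summable_norm.mp h

lemma enorm_le_wnormE (a : ℤ → ℂ) (k : ℤ) : ‖a k‖ₑ ≤ wnormE a := ENNReal.le_tsum k

lemma enorm_le_fnormE (S : ℕ → ℕ → ℂ) (i j : ℕ) : ‖S i j‖ₑ ≤ fnormE S :=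
  ENNReal.le_tsum (f := fun p : ℕ × ℕ => ‖S p.1 p.2‖ₑ) (i, j)

lemma fnormE_sub_le (S S' : ℕ → ℕ → ℂ) : fnormE (S - S') ≤ fnormE S + fnormE S' :=
  (ENNReal.tsum_le_tsum fun _ => enorm_sub_le).trans_eq ENNReal.tsum_add

lemma summable_mul_of_tsum_enorm_ne_top {ι : Type*} {f g : ι → ℂ} {c : ℝ≥0∞}
    (hf : ∑' r, ‖f r‖ₑ ≠ ⊤) (hg : ∀ r, ‖g r‖ₑ ≤ c) (hc : c ≠ ⊤) :
    Summable fun r => f r * g r := by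
  refine Summable.of_norm (tsum_enorm_ne_top_iff_summable_norm.mp ?_)
  refine ne_top_of_le_ne_top (ENNReal.mul_ne_top hf hc) ?_
  calc ∑' r, ‖f r * g r‖ₑ ≤ ∑' r, ‖f r‖ₑ * c :=
        ENNReal.tsum_le_tsum fun r => by rw [enorm_mul]; gcongr; exact hg r
    _ = (∑' r, ‖f r‖ₑ) * c := ENNReal.tsum_mul_right

lemma tsum_tsum_mul_comp_sub (f g : ℤ → ℝ≥0∞) :
    ∑' k, ∑' j, f j * g (k - j) = (∑' j, f j) * ∑' k, g k := by
  rw [ENNReal.tsum_comm, ← ENNReal.tsum_mul_right]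
  refine tsum_congr fun j => ?_
  rw [ENNReal.tsum_mul_left]
  exact congr_arg _ ((Equiv.subRight j).tsum_eq g)

lemma enorm_convW_le (a b : ℤ → ℂ) (k : ℤ) :
    ‖convW a b k‖ₑ ≤ ∑' j, ‖a j‖ₑ * ‖b (k - j)‖ₑ := by
  simpa only [convW, enorm_mul] using enorm_tsum_le_tsum_enorm (f := fun j => a j * b (k - j))

lemma wnormE_convW_le (a b : ℤ → ℂ) : wnormE (convW a b) ≤ wnormE a * wnormE b :=
  (ENNReal.tsum_le_tsum fun k => enorm_convW_le a b k).trans_eq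
    (tsum_tsum_mul_comp_sub (fun j => ‖a j‖ₑ) fun k => ‖b k‖ₑ)

lemma natAbs_le_natAbs_add_natAbs_sub (j k : ℤ) :
    (k.natAbs : ℝ≥0∞) ≤ j.natAbs + (k - j).natAbs := by
  exact_mod_cast (add_sub_cancel j k) ▸ Int.natAbs_add_le j (k - j)

/-- The Leibniz rule `(ab)' = a'b + ab'`, in norm. -/
lemma wnormE'_convW_le (a b : ℤ → ℂ) :
    wnormE' (convW a b) ≤ wnormE' a * wnormE b + wnormE a * wnormE' b := by
  calc wnormE' (convW a b)
      ≤ ∑' k, ∑' j, ((j.natAbs : ℝ≥0∞) * ‖a j‖ₑ * ‖b (k - j)‖ₑ +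
          ‖a j‖ₑ * (((k - j).natAbs : ℝ≥0∞) * ‖b (k - j)‖ₑ)) := by
        refine ENNReal.tsum_le_tsum fun k => ?_
        calc (k.natAbs : ℝ≥0∞) * ‖convW a b k‖ₑ
            ≤ (k.natAbs : ℝ≥0∞) * ∑' j, ‖a j‖ₑ * ‖b (k - j)‖ₑ := by
              gcongr; exact enorm_convW_le a b k
          _ = ∑' j, (k.natAbs : ℝ≥0∞) * (‖a j‖ₑ * ‖b (k - j)‖ₑ) := ENNReal.tsum_mul_left.symm
          _ ≤ _ := ENNReal.tsum_le_tsum fun j => by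
              grw [natAbs_le_natAbs_add_natAbs_sub j k]
              exact le_of_eq (by ring)
    _ = wnormE' a * wnormE b + wnormE a * wnormE' b := by
        simp_rw [ENNReal.tsum_add]
        exact congr_arg₂ (· + ·)
          (tsum_tsum_mul_comp_sub (fun j => (j.natAbs : ℝ≥0∞) * ‖a j‖ₑ) fun k => ‖b k‖ₑ)
          (tsum_tsum_mul_comp_sub (fun j => ‖a j‖ₑ) fun k => (k.natAbs : ℝ≥0∞) * ‖b k‖ₑ)

lemma powW_zero_apply (a : ℤ → ℂ) (k : ℤ) : powW a 0 k = if k = 0 then 1 else 0 := rfl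

lemma wnormE_powW_zero (a : ℤ → ℂ) : wnormE (powW a 0) = 1 := by
  rw [wnormE, tsum_eq_single 0 fun k hk => by simp [powW_zero_apply, hk]]
  simp [powW_zero_apply]

lemma wnormE'_powW_zero (a : ℤ → ℂ) : wnormE' (powW a 0) = 0 :=
  ENNReal.tsum_eq_zero.mpr fun k => by by_cases hk : k = 0 <;> simp [powW_zero_apply, hk]

lemma wnormE_powW_le (a : ℤ → ℂ) (n : ℕ) : wnormE (powW a n) ≤ wnormE a ^ n := by
  induction n with
  | zero => rw [wnormE_powW_zero, pow_zero]
  | succ n ih =>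
      calc wnormE (powW a (n + 1)) ≤ wnormE a * wnormE (powW a n) := wnormE_convW_le _ _
        _ ≤ wnormE a * wnormE a ^ n := by gcongr
        _ = wnormE a ^ (n + 1) := (pow_succ' _ _).symm

lemma wnormE'_powW_le (a : ℤ → ℂ) (n : ℕ) :
    wnormE' (powW a n) ≤ n * wnormE' a * wnormE a ^ (n - 1) := by
  induction n with
  | zero => simp [wnormE'_powW_zero]
  | succ n ih =>
      calc wnormE' (powW a (n + 1))
          ≤ wnormE' a * wnormE (powW a n) + wnormE a * wnormE' (powW a n) := wnormE'_convW_le _ _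
        _ ≤ wnormE' a * wnormE a ^ n + wnormE a * (n * wnormE' a * wnormE a ^ (n - 1)) := by
          gcongr
          exact wnormE_powW_le a n
        _ = (n + 1 : ℕ) * wnormE' a * wnormE a ^ (n + 1 - 1) := by
          rcases n with _ | n
          · simp
          · simp only [Nat.add_sub_cancel]; push_cast; ring

lemma enorm_matMul_le (A B : ℕ → ℕ → ℂ) (i j : ℕ) :
    ‖matMul A B i j‖ₑ ≤ ∑' r, ‖A i r‖ₑ * ‖B r j‖ₑ := by
  simpa only [matMul, enorm_mul] using enorm_tsum_le_tsum_enorm (f := fun r => A i r * B r j)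

lemma fnormE_eq_tsum_tsum (S : ℕ → ℕ → ℂ) : fnormE S = ∑' i, ∑' j, ‖S i j‖ₑ :=
  ENNReal.tsum_prod (f := fun i j => ‖S i j‖ₑ)

lemma fnormE_matMul_le (A B : ℕ → ℕ → ℂ) :
    fnormE (matMul A B) ≤ ∑' r, (∑' i, ‖A i r‖ₑ) * ∑' j, ‖B r j‖ₑ := by
  calc fnormE (matMul A B) ≤ ∑' i, ∑' j, ∑' r, ‖A i r‖ₑ * ‖B r j‖ₑ := by
        rw [fnormE_eq_tsum_tsum]
        gcongr with i j
        exact enorm_matMul_le A B i j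
    _ = ∑' r, ∑' i, ∑' j, ‖A i r‖ₑ * ‖B r j‖ₑ :=
        (tsum_congr fun i => ENNReal.tsum_comm).trans ENNReal.tsum_comm
    _ = ∑' r, (∑' i, ‖A i r‖ₑ) * ∑' j, ‖B r j‖ₑ := tsum_congr fun r => by
        rw [← ENNReal.tsum_mul_right]
        exact tsum_congr fun i => ENNReal.tsum_mul_left

lemma fnormE_matMul_le_of_col (A B : ℕ → ℕ → ℂ) {c : ℝ≥0∞} (hA : ∀ r, ∑' i, ‖A i r‖ₑ ≤ c) :
    fnormE (matMul A B) ≤ c * fnormE B :=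
  calc fnormE (matMul A B) ≤ _ := fnormE_matMul_le A B
    _ ≤ ∑' r, c * ∑' j, ‖B r j‖ₑ := by gcongr with r; exact hA r
    _ = c * fnormE B := by rw [ENNReal.tsum_mul_left, fnormE_eq_tsum_tsum]

lemma fnormE_matMul_le_of_row (A B : ℕ → ℕ → ℂ) {c : ℝ≥0∞} (hB : ∀ r, ∑' j, ‖B r j‖ₑ ≤ c) :
    fnormE (matMul A B) ≤ fnormE A * c :=
  calc fnormE (matMul A B) ≤ _ := fnormE_matMul_le A B
    _ ≤ ∑' r, (∑' i, ‖A i r‖ₑ) * c := by gcongr with r; exact hB r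
    _ = fnormE A * c := by rw [ENNReal.tsum_mul_right, fnormE_eq_tsum_tsum, ENNReal.tsum_comm]

lemma tsum_enorm_Toep_row_le (a : ℤ → ℂ) (i : ℕ) : ∑' r, ‖Toep a i r‖ₑ ≤ wnormE a :=
  ENNReal.tsum_comp_le_tsum_of_injective (f := fun r : ℕ => (r : ℤ) - i)
    (fun x y h => by simpa using h) _

lemma tsum_enorm_Toep_col_le (a : ℤ → ℂ) (r : ℕ) : ∑' i, ‖Toep a i r‖ₑ ≤ wnormE a :=
  ENNReal.tsum_comp_le_tsum_of_injective (f := fun i : ℕ => (r : ℤ) - i)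
    (fun x y h => by simpa using h) _

lemma fnormE_Toep_matMul_le (a : ℤ → ℂ) (B : ℕ → ℕ → ℂ) :
    fnormE (matMul (Toep a) B) ≤ wnormE a * fnormE B :=
  fnormE_matMul_le_of_col _ _ (tsum_enorm_Toep_col_le a)

lemma tsum_prod_comp_add (f : ℕ → ℝ≥0∞) :
    ∑' p : ℕ × ℕ, f (p.1 + p.2) = ∑' n, (n + 1) * f n := by
  rw [← Finset.HasAntidiagonal.sigmaAntidiagonalEquivProd.tsum_eq, ENNReal.tsum_sigma']
  refine tsum_congr fun n => ?_
  calc ∑' x : Finset.HasAntidiagonal.antidiagonal n, f (x.1.1 + x.1.2)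
      = ∑' _ : Finset.HasAntidiagonal.antidiagonal n, f n :=
        tsum_congr fun x => by rw [Finset.HasAntidiagonal.mem_antidiagonal.mp x.2]
    _ = (n + 1) * f n := by simp [tsum_fintype, nsmul_eq_mul]

lemma fnormE_Hminus_le (a : ℤ → ℂ) : fnormE (Hminus a) ≤ wnormE' a :=
  calc fnormE (Hminus a) = ∑' p : ℕ × ℕ, ‖a (-((p.1 + p.2 + 1 : ℕ) : ℤ))‖ₑ := by
        simp only [fnormE, Hminus, Nat.cast_add, Nat.cast_one]
    _ = ∑' n : ℕ, (n + 1) * ‖a (-((n + 1 : ℕ) : ℤ))‖ₑ :=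
        tsum_prod_comp_add fun n => ‖a (-((n + 1 : ℕ) : ℤ))‖ₑ
    _ = ∑' n : ℕ, ((-((n + 1 : ℕ) : ℤ)).natAbs : ℝ≥0∞) * ‖a (-((n + 1 : ℕ) : ℤ))‖ₑ :=
        tsum_congr fun n => by rw [Int.natAbs_neg, Int.natAbs_natCast]; norm_cast
    _ ≤ wnormE' a :=
        ENNReal.tsum_comp_le_tsum_of_injective (f := fun n : ℕ => -((n + 1 : ℕ) : ℤ))
          (fun x y h => by simpa using h) fun k => (k.natAbs : ℝ≥0∞) * ‖a k‖ₑ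

lemma tsum_enorm_Hplus_row_le (b : ℤ → ℂ) (s : ℕ) : ∑' j, ‖Hplus b s j‖ₑ ≤ wnormE' b :=
  calc ∑' j, ‖Hplus b s j‖ₑ
      ≤ ∑' j : ℕ, (((s : ℤ) + j + 1).natAbs : ℝ≥0∞) * ‖b (s + j + 1)‖ₑ :=
        ENNReal.tsum_le_tsum fun j =>
          le_mul_of_one_le_left' (Nat.one_le_cast.mpr (Int.natAbs_pos.mpr (by omega)))
    _ ≤ wnormE' b :=
        ENNReal.tsum_comp_le_tsum_of_injective (f := fun j : ℕ => (s : ℤ) + j + 1)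
          (fun x y h => by simpa using h) fun k => (k.natAbs : ℝ≥0∞) * ‖b k‖ₑ

lemma fnormE_Hminus_matMul_Hplus_le (a b : ℤ → ℂ) :
    fnormE (matMul (Hminus a) (Hplus b)) ≤ wnormE' a * wnormE' b :=
  (fnormE_matMul_le_of_row _ _ (tsum_enorm_Hplus_row_le b)).trans
    (by gcongr; exact fnormE_Hminus_le a)

lemma matMul_add_right {A B C : ℕ → ℕ → ℂ} (hB : ∀ i j, Summable fun r => A i r * B r j)
    (hC : ∀ i j, Summable fun r => A i r * C r j) :
    matMul A (B + C) = matMul A B + matMul A C := by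
  funext i j
  simp only [matMul, Pi.add_apply, mul_add]
  exact (hB i j).tsum_add (hC i j)

lemma summable_Toep_mul {a : ℤ → ℂ} (ha : wnormE a ≠ ⊤) {B : ℕ → ℕ → ℂ} {c : ℝ≥0∞}
    (hB : ∀ r j, ‖B r j‖ₑ ≤ c) (hc : c ≠ ⊤) (i j : ℕ) :
    Summable fun r => Toep a i r * B r j :=
  summable_mul_of_tsum_enorm_ne_top (ne_top_of_le_ne_top ha (tsum_enorm_Toep_row_le a i))
    (fun r => hB r j) hc

lemma Toep_convW {a b : ℤ → ℂ} (ha : wnormE a ≠ ⊤) (hb : wnormE b ≠ ⊤) :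
    Toep (convW a b) = matMul (Toep a) (Toep b) + matMul (Hminus a) (Hplus b) := by
  funext i j
  set F : ℤ → ℂ := fun r => a (r - i) * b (j - r)
  have hF : Summable F := summable_mul_of_tsum_enorm_ne_top
    (((Equiv.subRight (i : ℤ)).tsum_eq fun k => ‖a k‖ₑ).trans_ne ha)
    (fun r => enorm_le_wnormE b _) hb
  -- the intermediate index `r` of `∑ₖ a_k b_{j-i-k}` is `i + k`; split it at `0`
  calc Toep (convW a b) i j = ∑' r, a (r - i) * b (j - i - (r - i)) :=
        ((Equiv.subRight (i : ℤ)).tsum_eq fun k => a k * b (j - i - k)).symm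
    _ = ∑' r, F r := by simp only [F, sub_sub_sub_cancel_right]
    _ = ∑' n : ℕ, F n + ∑' n : ℕ, F (-(n + 1)) :=
        tsum_of_nat_of_neg_add_one (hF.comp_injective Nat.cast_injective)
          (hF.comp_injective fun x y h => by simpa using h)
    _ = _ := by
        congr 1
        exact tsum_congr fun n => by simp only [F, Hminus, Hplus]; ring_nf

lemma Toep_powW_zero (a : ℤ → ℂ) : Toep (powW a 0) = idMat := by
  funext i j
  simp only [Toep, powW_zero_apply, idMat, sub_eq_zero, Nat.cast_inj, eq_comm]

lemma powW_one (a : ℤ → ℂ) : powW a 1 = a := by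
  funext k
  change ∑' j, a j * powW a 0 (k - j) = a k
  rw [tsum_eq_single k fun j hj => by simp [powW_zero_apply, sub_eq_zero, Ne.symm hj]]
  simp [powW_zero_apply]

lemma matMul_idMat (A : ℕ → ℕ → ℂ) : matMul A idMat = A := by
  funext i j
  rw [matMul, tsum_eq_single j fun r hr => by simp [idMat, hr]]
  simp [idMat]

lemma powDefect_zero (a : ℤ → ℂ) : powDefect a 0 = 0 := by
  rw [powDefect, Toep_powW_zero, matPow, sub_self]

lemma powDefect_one (a : ℤ → ℂ) : powDefect a 1 = 0 := by
  rw [powDefect, powW_one, matPow, matPow, matMul_idMat, sub_self]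

lemma powDefect_succ {a : ℤ → ℂ} (ha : wnormE a ≠ ⊤) {n : ℕ}
    (hE : fnormE (powDefect a n) ≠ ⊤) :
    powDefect a (n + 1) =
      matMul (Toep a) (powDefect a n) - matMul (Hminus a) (Hplus (powW a n)) := by
  have hpow : wnormE (powW a n) ≠ ⊤ :=
    ne_top_of_le_ne_top (ENNReal.pow_ne_top ha) (wnormE_powW_le a n)
  have hsplit : matPow (Toep a) (n + 1) =
      matMul (Toep a) (powDefect a n) + matMul (Toep a) (Toep (powW a n)) := by
    rw [← matMul_add_right (summable_Toep_mul ha (enorm_le_fnormE _) hE)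
      (summable_Toep_mul (B := Toep (powW a n)) ha (fun r j => enorm_le_wnormE _ _) hpow),
      powDefect, sub_add_cancel]
    rfl
  change _ - Toep (convW a (powW a n)) = _
  rw [hsplit, Toep_convW ha hpow]
  abel

lemma choose_two_recursion {R : Type*} [CommSemiring R] (x y : R) (n : ℕ) :
    x * (n.choose 2 * y ^ 2 * x ^ (n - 2)) + y * (n * y * x ^ (n - 1)) =
      (n + 1).choose 2 * y ^ 2 * x ^ (n + 1 - 2) := by
  rcases n with _ | _ | n
  · simp
  · simp [sq]
  · rw [Nat.choose_succ_succ' (n + 2) 1]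
    simp only [Nat.choose_one_right, Nat.add_sub_cancel, show n + 2 + 1 - 2 = n + 1 by omega]
    push_cast
    ring

theorem fnormE_powDefect_le {a : ℤ → ℂ} (ha : wnormE a ≠ ⊤) (ha' : wnormE' a ≠ ⊤) (n : ℕ) :
    fnormE (powDefect a n) ≤ n.choose 2 * wnormE' a ^ 2 * wnormE a ^ (n - 2) := by
  induction n with
  | zero => simp [powDefect_zero, fnormE]
  | succ n ih =>
    have hE : fnormE (powDefect a n) ≠ ⊤ := ne_top_of_le_ne_top (by finiteness) ih
    calc fnormE (powDefect a (n + 1))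
        ≤ fnormE (matMul (Toep a) (powDefect a n)) +
            fnormE (matMul (Hminus a) (Hplus (powW a n))) := by
          rw [powDefect_succ ha hE]
          exact fnormE_sub_le _ _
      _ ≤ wnormE a * fnormE (powDefect a n) + wnormE' a * wnormE' (powW a n) :=
          add_le_add (fnormE_Toep_matMul_le _ _) (fnormE_Hminus_matMul_Hplus_le _ _)
      _ ≤ wnormE a * (n.choose 2 * wnormE' a ^ 2 * wnormE a ^ (n - 2)) +
            wnormE' a * (n * wnormE' a * wnormE a ^ (n - 1)) := by
          gcongr
          exact wnormE'_powW_le a n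
      _ = _ := by exact_mod_cast choose_two_recursion (wnormE a) (wnormE' a) n

end WienerToeplitz

open WienerToeplitz in
/-- `E_0 = E_1 = 0` and `‖E_i‖_ℱ ≤ i(i-1)/2 ‖a'‖_W² ‖a‖_W^{i-2}` for `i ≥ 2`;
in particular each `E_i ∈ ℱ`. -/
theorem stmt11 (a : ℤ → ℂ) (ha : MemW a) (ha' : MemW' a) :
    matPow (Toep a) 0 - Toep (powW a 0) = 0 ∧
    matPow (Toep a) 1 - Toep (powW a 1) = 0 ∧
    ∀ i : ℕ, 2 ≤ i →
      MemF (matPow (Toep a) i - Toep (powW a i)) ∧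
      Fnorm (matPow (Toep a) i - Toep (powW a i)) ≤
        (i : ℝ) * ((i : ℝ) - 1) / 2 * Wnorm' a ^ 2 * Wnorm a ^ (i - 2) := by
  have hw : wnormE a ≠ ⊤ := wnormE_ne_top ha
  have hw' : wnormE' a ≠ ⊤ := wnormE'_ne_top ha'
  refine ⟨powDefect_zero a, powDefect_one a, fun i _ => ?_⟩
  have hbound := fnormE_powDefect_le hw hw' i
  refine ⟨memF_of_fnormE_ne_top (ne_top_of_le_ne_top (by finiteness) hbound), ?_⟩
  calc Fnorm (powDefect a i) = (fnormE (powDefect a i)).toReal := (toReal_fnormE _).symm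
    _ ≤ (i.choose 2 * wnormE' a ^ 2 * wnormE a ^ (i - 2) : ℝ≥0∞).toReal :=
        ENNReal.toReal_mono (by finiteness) hbound
    _ = _ := by
        simp only [ENNReal.toReal_mul, ENNReal.toReal_pow, ENNReal.toReal_natCast, toReal_wnormE,
          toReal_wnormE', Nat.cast_choose_two]
end
end

section
/- Let $a\in\mathcal W$ with $a'\in\mathcal W$. Then $\exp(T(a))=T(\exp(a))+F$ for some matrix $F$ with $\|F\|_{\mathcal F}<\infty$; i.e., the exponential of a semi-infinite Toeplitz matrix with symbol in $\{a: a,a'\in\mathcal W\}$ is again a quasi-Toeplitz matrix, with Toeplitz part given by the symbol $\exp(a)$. -/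
open scoped BigOperators

noncomputable section

/-!
Write `E_m = T(a)^m - T(a^m)`. Widom's identity `T(a) T(b) = T(ab) - H(a₋) H(b₊)` gives the
recursion `E_{m+1} = T(a) E_m - H(a₋) H((a^m)₊)`. Since `T(a)` acts on `ℱ` with norm at most
`‖a‖_W` and `‖H(a₋)‖_ℱ ≤ ‖a'‖_W`, induction gives `‖E_{m+1}‖_ℱ ≤ (m+1) ‖a'‖_W ‖a‖_W^m`, the bound
for the derivative of `a^(m+1)`. Hence `F = ∑ E_m / m!` converges in `ℱ`, with
`‖F‖_ℱ ≤ ‖a'‖_W exp ‖a‖_W`, and `exp(T(a)) = T(exp a) + F` entrywise.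
-/

open scoped NNReal ENNReal
open Filter

/- `ℝ≥0∞`-valued counterparts of `Fnorm`, `Wnorm` and `Wnorm'`: in `ℝ≥0∞` every series has a sum,
so double series can be rearranged without summability side conditions. -/
def Fenorm (S : ℕ → ℕ → ℂ) : ℝ≥0∞ := ∑' p : ℕ × ℕ, ‖S p.1 p.2‖ₑ

def Wenorm (a : ℤ → ℂ) : ℝ≥0∞ := ∑' k : ℤ, ‖a k‖ₑ

def Wenorm' (a : ℤ → ℂ) : ℝ≥0∞ := ∑' k : ℤ, (k.natAbs : ℝ≥0∞) * ‖a k‖ₑ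

lemma memF_iff_Fenorm_ne_top {S : ℕ → ℕ → ℂ} : MemF S ↔ Fenorm S ≠ ⊤ :=
  tsum_enorm_ne_top_iff_summable_norm.symm

lemma memW_iff_Wenorm_ne_top {a : ℤ → ℂ} : MemW a ↔ Wenorm a ≠ ⊤ :=
  tsum_enorm_ne_top_iff_summable_norm.symm

lemma Wenorm'_ne_top {a : ℤ → ℂ} (ha' : MemW' a) : Wenorm' a ≠ ⊤ := by
  have h : ∀ k : ℤ, (k.natAbs : ℝ≥0∞) * ‖a k‖ₑ = ‖((|(k : ℝ)| * ‖a k‖ : ℝ))‖ₑ := by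
    intro k
    rw [Real.enorm_of_nonneg (by positivity), ← Int.cast_abs, ← Nat.cast_natAbs,
      ENNReal.ofReal_mul (by positivity), ENNReal.ofReal_natCast, ofReal_norm]
  rw [Wenorm', tsum_congr h, tsum_enorm_ne_top_iff_summable_norm]
  exact ha'.norm

lemma enorm_le_Wenorm (a : ℤ → ℂ) (k : ℤ) : ‖a k‖ₑ ≤ Wenorm a :=
  ENNReal.le_tsum k

lemma tsum_enorm_comp_sub (a : ℤ → ℂ) (i : ℤ) : ∑' r : ℤ, ‖a (r - i)‖ₑ = Wenorm a :=
  (Equiv.subRight i).tsum_eq fun k => ‖a k‖ₑ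

lemma Wenorm_convW_le (a b : ℤ → ℂ) : Wenorm (convW a b) ≤ Wenorm a * Wenorm b :=
  calc Wenorm (convW a b)
      ≤ ∑' k : ℤ, ∑' t : ℤ, ‖a t‖ₑ * ‖b (k - t)‖ₑ :=
        ENNReal.tsum_le_tsum fun k =>
          enorm_tsum_le_tsum_enorm.trans_eq (tsum_congr fun t => enorm_mul _ _)
    _ = ∑' t : ℤ, ‖a t‖ₑ * ∑' k : ℤ, ‖b (k - t)‖ₑ := by
        rw [ENNReal.tsum_comm]
        exact tsum_congr fun t => ENNReal.tsum_mul_left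
    _ = Wenorm a * Wenorm b := by
        simp only [tsum_enorm_comp_sub, ENNReal.tsum_mul_right, Wenorm]

lemma Wenorm_powW_le (a : ℤ → ℂ) (m : ℕ) : Wenorm (powW a m) ≤ Wenorm a ^ m := by
  induction m with
  | zero =>
    rw [Wenorm, tsum_eq_single 0 fun k hk => by simp [powW, hk]]
    simp [powW]
  | succ m ih =>
    calc Wenorm (powW a (m + 1)) ≤ Wenorm a * Wenorm (powW a m) := Wenorm_convW_le _ _
      _ ≤ Wenorm a * Wenorm a ^ m := by gcongr
      _ = Wenorm a ^ (m + 1) := (pow_succ' _ _).symm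

lemma memW_powW {a : ℤ → ℂ} (ha : MemW a) (m : ℕ) : MemW (powW a m) :=
  memW_iff_Wenorm_ne_top.2 <| ne_top_of_le_ne_top
    (ENNReal.pow_ne_top (memW_iff_Wenorm_ne_top.1 ha)) (Wenorm_powW_le a m)

lemma enorm_matMul_le (A B : ℕ → ℕ → ℂ) (i j : ℕ) :
    ‖matMul A B i j‖ₑ ≤ ∑' r : ℕ, ‖A i r‖ₑ * ‖B r j‖ₑ :=
  enorm_tsum_le_tsum_enorm.trans_eq (tsum_congr fun _ => enorm_mul _ _)

lemma Fenorm_sub_le (A B : ℕ → ℕ → ℂ) : Fenorm (A - B) ≤ Fenorm A + Fenorm B :=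
  (ENNReal.tsum_le_tsum fun _ => enorm_sub_le).trans_eq ENNReal.tsum_add

lemma Fenorm_const_mul (c : ℂ) (A : ℕ → ℕ → ℂ) :
    Fenorm (fun i j => c * A i j) = ‖c‖ₑ * Fenorm A := by
  simp only [Fenorm, enorm_mul, ENNReal.tsum_mul_left]

lemma Fenorm_matMul_le (A B : ℕ → ℕ → ℂ) :
    Fenorm (matMul A B) ≤ ∑' i, ∑' r, ‖A i r‖ₑ * ∑' j, ‖B r j‖ₑ :=
  calc Fenorm (matMul A B)
      ≤ ∑' p : ℕ × ℕ, ∑' r : ℕ, ‖A p.1 r‖ₑ * ‖B r p.2‖ₑ :=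
        ENNReal.tsum_le_tsum fun p => enorm_matMul_le A B p.1 p.2
    _ = ∑' i, ∑' r, ‖A i r‖ₑ * ∑' j, ‖B r j‖ₑ := by
        rw [ENNReal.tsum_prod']
        refine tsum_congr fun i => ?_
        dsimp only
        rw [ENNReal.tsum_comm]
        exact tsum_congr fun r => ENNReal.tsum_mul_left

lemma Fenorm_matMul_le_of_col {A B : ℕ → ℕ → ℂ} {C : ℝ≥0∞}
    (hA : ∀ r, ∑' i, ‖A i r‖ₑ ≤ C) :
    Fenorm (matMul A B) ≤ C * Fenorm B :=
  calc Fenorm (matMul A B)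
      ≤ ∑' r, (∑' i, ‖A i r‖ₑ) * ∑' j, ‖B r j‖ₑ := by
        simpa only [ENNReal.tsum_mul_right] using
          (Fenorm_matMul_le A B).trans_eq ENNReal.tsum_comm
    _ ≤ ∑' r, C * ∑' j, ‖B r j‖ₑ := by gcongr with r; exact hA r
    _ = C * Fenorm B := by rw [ENNReal.tsum_mul_left, Fenorm, ENNReal.tsum_prod']

lemma Fenorm_matMul_le_of_row {A B : ℕ → ℕ → ℂ} {D : ℝ≥0∞}
    (hB : ∀ r, ∑' j, ‖B r j‖ₑ ≤ D) :
    Fenorm (matMul A B) ≤ Fenorm A * D :=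
  calc Fenorm (matMul A B)
      ≤ ∑' i, ∑' r, ‖A i r‖ₑ * D := by
        refine (Fenorm_matMul_le A B).trans ?_
        gcongr with i r
        exact hB r
    _ = Fenorm A * D := by simp only [Fenorm, ENNReal.tsum_prod', ENNReal.tsum_mul_right]

lemma summable_mul_of_enorm_le {ι : Type*} {x y : ι → ℂ} {C : ℝ≥0∞} (hC : C ≠ ⊤)
    (hx : ∀ r, ‖x r‖ₑ ≤ C) (hy : ∑' r, ‖y r‖ₑ ≠ ⊤) : Summable fun r => x r * y r := by
  refine Summable.of_enorm (ne_top_of_le_ne_top (ENNReal.mul_ne_top hC hy) ?_)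
  simp only [enorm_mul, ← ENNReal.tsum_mul_left]
  exact ENNReal.tsum_le_tsum fun r => mul_le_mul_left (hx r) _

lemma tsum_enorm_col_le_Fenorm (S : ℕ → ℕ → ℂ) (j : ℕ) : ∑' i, ‖S i j‖ₑ ≤ Fenorm S :=
  ENNReal.tsum_comp_le_tsum_of_injective (f := fun i : ℕ => (i, j))
    (fun _ _ h => (Prod.ext_iff.1 h).1) fun p => ‖S p.1 p.2‖ₑ

lemma matMul_add_right {A B C : ℕ → ℕ → ℂ} (hB : ∀ i j, Summable fun r => A i r * B r j)
    (hC : ∀ i j, Summable fun r => A i r * C r j) :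
    matMul A (B + C) = matMul A B + matMul A C := by
  ext i j
  simp only [matMul, Pi.add_apply, mul_add]
  exact (hB i j).tsum_add (hC i j)

lemma Fenorm_tsum_le (E : ℕ → ℕ → ℕ → ℂ) :
    Fenorm (fun i j => ∑' m, E m i j) ≤ ∑' m, Fenorm (E m) :=
  (ENNReal.tsum_le_tsum fun _ => enorm_tsum_le_tsum_enorm).trans_eq ENNReal.tsum_comm

lemma summable_apply_of_tsum_Fenorm_ne_top {E : ℕ → ℕ → ℕ → ℂ} (h : ∑' m, Fenorm (E m) ≠ ⊤)
    (i j : ℕ) : Summable fun m => E m i j :=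
  Summable.of_enorm <| ne_top_of_le_ne_top h <|
    ENNReal.tsum_le_tsum fun m => ENNReal.le_tsum (f := fun p : ℕ × ℕ => ‖E m p.1 p.2‖ₑ) (i, j)

lemma tsum_prod_comp_add (g : ℕ → ℝ≥0∞) :
    ∑' p : ℕ × ℕ, g (p.1 + p.2) = ∑' n : ℕ, ((n : ℝ≥0∞) + 1) * g n := by
  rw [← Finset.HasAntidiagonal.sigmaAntidiagonalEquivProd.tsum_eq, ENNReal.tsum_sigma']
  refine tsum_congr fun n => ?_
  simp only [Finset.HasAntidiagonal.sigmaAntidiagonalEquivProd_apply, tsum_fintype]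
  rw [Finset.sum_coe_sort (Finset.HasAntidiagonal.antidiagonal n) fun p => g (p.1 + p.2),
    Finset.sum_congr rfl fun p hp => by rw [Finset.HasAntidiagonal.mem_antidiagonal.1 hp]]
  simp

section ToeplitzHankel

variable (a : ℤ → ℂ)

lemma tsum_enorm_Toep_col_le (j : ℕ) : ∑' i : ℕ, ‖Toep a i j‖ₑ ≤ Wenorm a :=
  ENNReal.tsum_comp_le_tsum_of_injective (f := fun i : ℕ => (j : ℤ) - i)
    (fun _ _ h => Nat.cast_injective (sub_right_injective h)) _

lemma tsum_enorm_Hplus_row_le (i : ℕ) : ∑' j : ℕ, ‖Hplus a i j‖ₑ ≤ Wenorm a :=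
  ENNReal.tsum_comp_le_tsum_of_injective (f := fun j : ℕ => (i : ℤ) + j + 1)
    (fun _ _ h => by simpa using h) _

lemma Fenorm_Hminus_le : Fenorm (Hminus a) ≤ Wenorm' a :=
  calc Fenorm (Hminus a)
      = ∑' n : ℕ, ((n : ℝ≥0∞) + 1) * ‖a (-((n : ℤ) + 1))‖ₑ := by
        rw [← tsum_prod_comp_add]
        simp [Fenorm, Hminus]
    _ ≤ Wenorm' a := by
        refine le_of_eq_of_le (tsum_congr fun n => ?_) (ENNReal.tsum_comp_le_tsum_of_injective
          (f := fun n : ℕ => -((n : ℤ) + 1)) (fun _ _ h => by simpa using h)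
          fun k : ℤ => (k.natAbs : ℝ≥0∞) * ‖a k‖ₑ)
        rw [Int.natAbs_neg, show ((n : ℤ) + 1).natAbs = n + 1 by omega]
        push_cast
        rfl

end ToeplitzHankel

lemma matMul_Toep_Toep {a b : ℤ → ℂ} (ha : MemW a) (hb : MemW b) :
    matMul (Toep a) (Toep b) = Toep (convW a b) - matMul (Hminus a) (Hplus b) := by
  ext i j
  set f : ℤ → ℂ := fun r => a (r - i) * b (j - r)
  have hf : Summable f :=
    summable_mul_of_enorm_le (memW_iff_Wenorm_ne_top.1 ha) (fun r => enorm_le_Wenorm a _)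
      (((Equiv.subLeft (j : ℤ)).tsum_eq fun k => ‖b k‖ₑ).trans_ne (memW_iff_Wenorm_ne_top.1 hb))
  have hconv : Toep (convW a b) i j = ∑' r, f r :=
    ((Equiv.subRight (i : ℤ)).tsum_eq _).symm.trans
      (tsum_congr fun r => by simp only [Equiv.subRight_apply, f]; ring_nf)
  have hneg : ∑' n : ℕ, f (-((n : ℤ) + 1)) = matMul (Hminus a) (Hplus b) i j :=
    tsum_congr fun n => by simp only [f, Hminus, Hplus]; ring_nf
  rw [Pi.sub_apply, Pi.sub_apply, hconv, ← hneg,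
    tsum_of_nat_of_neg_add_one (hf.comp_injective Nat.cast_injective)
      (hf.comp_injective fun _ _ h => by simpa using h)]
  simp only [matMul, Toep, f, add_sub_cancel_right]

def powDefect (a : ℤ → ℂ) (m : ℕ) : ℕ → ℕ → ℂ := matPow (Toep a) m - Toep (powW a m)

lemma powDefect_zero (a : ℤ → ℂ) : powDefect a 0 = 0 := by
  ext i j
  by_cases h : i = j
  · simp [powDefect, matPow, idMat, Toep, powW, h]
  · simp [powDefect, matPow, idMat, Toep, powW, h, sub_eq_zero, Ne.symm h]

lemma Fenorm_powDefect_zero (a : ℤ → ℂ) : Fenorm (powDefect a 0) = 0 := by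
  simp [powDefect_zero, Fenorm]

section PowDefect

variable {a : ℤ → ℂ}

lemma powDefect_succ (ha : MemW a) {m : ℕ} (hE : Fenorm (powDefect a m) ≠ ⊤) :
    powDefect a (m + 1)
      = matMul (Toep a) (powDefect a m) - matMul (Hminus a) (Hplus (powW a m)) := by
  have hWa := memW_iff_Wenorm_ne_top.1 ha
  have hsplit : matPow (Toep a) (m + 1)
      = matMul (Toep a) (Toep (powW a m)) + matMul (Toep a) (powDefect a m) := by
    rw [← matMul_add_right, powDefect, add_sub_cancel]
    · rfl
    · exact fun i j => summable_mul_of_enorm_le hWa (fun r => enorm_le_Wenorm a _)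
        (ne_top_of_le_ne_top (memW_iff_Wenorm_ne_top.1 (memW_powW ha m))
          (tsum_enorm_Toep_col_le _ j))
    · exact fun i j => summable_mul_of_enorm_le hWa (fun r => enorm_le_Wenorm a _)
        (ne_top_of_le_ne_top hE (tsum_enorm_col_le_Fenorm _ j))
  rw [powDefect, hsplit, matMul_Toep_Toep ha (memW_powW ha m), powDefect, powW]
  abel

lemma Fenorm_powDefect_succ_le (ha : MemW a) {m : ℕ} (hE : Fenorm (powDefect a m) ≠ ⊤) :
    Fenorm (powDefect a (m + 1))
      ≤ Wenorm a * Fenorm (powDefect a m) + Wenorm' a * Wenorm a ^ m := by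
  rw [powDefect_succ ha hE]
  refine (Fenorm_sub_le _ _).trans (add_le_add ?_ ?_)
  · exact Fenorm_matMul_le_of_col (tsum_enorm_Toep_col_le a)
  · exact (Fenorm_matMul_le_of_row (tsum_enorm_Hplus_row_le _)).trans
      (mul_le_mul' (Fenorm_Hminus_le a) (Wenorm_powW_le a m))

lemma Fenorm_powDefect_succ_le_mul_pow (ha : MemW a) (ha' : MemW' a) (m : ℕ) :
    Fenorm (powDefect a (m + 1)) ≤ (m + 1) * Wenorm' a * Wenorm a ^ m := by
  induction m with
  | zero =>
    simpa [Fenorm_powDefect_zero] using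
      Fenorm_powDefect_succ_le ha ((Fenorm_powDefect_zero a).trans_ne ENNReal.zero_ne_top)
  | succ m ih =>
    have hE : Fenorm (powDefect a (m + 1)) ≠ ⊤ := ne_top_of_le_ne_top
      (ENNReal.mul_ne_top (ENNReal.mul_ne_top (by simp) (Wenorm'_ne_top ha'))
        (ENNReal.pow_ne_top (memW_iff_Wenorm_ne_top.1 ha))) ih
    calc Fenorm (powDefect a (m + 1 + 1))
        ≤ Wenorm a * Fenorm (powDefect a (m + 1)) + Wenorm' a * Wenorm a ^ (m + 1) :=
          Fenorm_powDefect_succ_le ha hE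
      _ ≤ Wenorm a * ((m + 1) * Wenorm' a * Wenorm a ^ m) + Wenorm' a * Wenorm a ^ (m + 1) := by
          gcongr
      _ = (↑(m + 1) + 1) * Wenorm' a * Wenorm a ^ (m + 1) := by push_cast; ring

end PowDefect

section Exponential

open Nat

lemma enorm_inv_factorial (m : ℕ) : ‖(m ! : ℂ)⁻¹‖ₑ = (m ! : ℝ≥0∞)⁻¹ := by
  rw [enorm_inv (by exact_mod_cast m.factorial_ne_zero), ← ofReal_norm, Complex.norm_natCast,
    ENNReal.ofReal_natCast]

lemma inv_factorial_succ_mul (m : ℕ) : ((m + 1)! : ℝ≥0∞)⁻¹ * (m + 1) = (m ! : ℝ≥0∞)⁻¹ := by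
  rw [Nat.factorial_succ, Nat.cast_mul, ENNReal.mul_inv (by simp) (by simp), mul_comm,
    ← mul_assoc]
  push_cast
  rw [ENNReal.mul_inv_cancel (by simp) (by simp), one_mul]

lemma tsum_inv_factorial_mul_pow_ne_top {c : ℝ≥0∞} (hc : c ≠ ⊤) :
    ∑' m : ℕ, (m ! : ℝ≥0∞)⁻¹ * c ^ m ≠ ⊤ := by
  lift c to ℝ≥0 using hc
  have hcoe (m : ℕ) : (m ! : ℝ≥0∞)⁻¹ * (c : ℝ≥0∞) ^ m = ((c ^ m / m ! : ℝ≥0) : ℝ≥0∞) := by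
    rw [ENNReal.coe_div (by exact_mod_cast m.factorial_ne_zero), ENNReal.div_eq_inv_mul]
    push_cast
    rfl
  rw [tsum_congr hcoe, ENNReal.tsum_coe_ne_top_iff_summable, ← NNReal.summable_coe]
  push_cast
  exact Real.summable_pow_div_factorial c

variable {a : ℤ → ℂ}

lemma hasSum_expW (ha : MemW a) (k : ℤ) :
    HasSum (fun m => (m ! : ℂ)⁻¹ * powW a m k) (expW a k) := by
  refine (Summable.of_enorm (ne_top_of_le_ne_top
    (tsum_inv_factorial_mul_pow_ne_top (memW_iff_Wenorm_ne_top.1 ha)) ?_)).hasSum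
  refine ENNReal.tsum_le_tsum fun m => ?_
  rw [enorm_mul, enorm_inv_factorial]
  gcongr
  exact (enorm_le_Wenorm _ k).trans (Wenorm_powW_le a m)

lemma tsum_inv_factorial_mul_Fenorm_powDefect_le (ha : MemW a) (ha' : MemW' a) :
    ∑' m : ℕ, (m ! : ℝ≥0∞)⁻¹ * Fenorm (powDefect a m)
      ≤ Wenorm' a * ∑' m : ℕ, (m ! : ℝ≥0∞)⁻¹ * Wenorm a ^ m := by
  rw [tsum_eq_zero_add' ENNReal.summable, Fenorm_powDefect_zero, mul_zero, zero_add,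
    ← ENNReal.tsum_mul_left]
  refine ENNReal.tsum_le_tsum fun m => ?_
  calc ((m + 1)! : ℝ≥0∞)⁻¹ * Fenorm (powDefect a (m + 1))
      ≤ ((m + 1)! : ℝ≥0∞)⁻¹ * ((m + 1) * Wenorm' a * Wenorm a ^ m) := by
        gcongr
        exact Fenorm_powDefect_succ_le_mul_pow ha ha' m
    _ = Wenorm' a * ((m ! : ℝ≥0∞)⁻¹ * Wenorm a ^ m) := by
        rw [← inv_factorial_succ_mul m]
        ring

end Exponential

/-- `exp(T(a)) = T(exp(a)) + F` with `‖F‖_ℱ < ∞`: the partial sums of the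
exponential series converge entrywise to `T(exp a) + F` for some `F ∈ ℱ`. -/
theorem stmt13 (a : ℤ → ℂ) (ha : MemW a) (ha' : MemW' a) :
    ∃ F : ℕ → ℕ → ℂ, MemF F ∧
      ∀ i j : ℕ,
        Filter.Tendsto
          (fun k => ∑ m ∈ Finset.range (k + 1),
            (m.factorial : ℂ)⁻¹ * matPow (Toep a) m i j)
          Filter.atTop (nhds (Toep (expW a) i j + F i j)) := by
  set E : ℕ → ℕ → ℕ → ℂ := fun m i j => (m.factorial : ℂ)⁻¹ * powDefect a m i j
  have hE : ∑' m, Fenorm (E m) ≠ ⊤ := by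
    simp only [E, Fenorm_const_mul, enorm_inv_factorial]
    exact ne_top_of_le_ne_top (ENNReal.mul_ne_top (Wenorm'_ne_top ha')
      (tsum_inv_factorial_mul_pow_ne_top (memW_iff_Wenorm_ne_top.1 ha)))
      (tsum_inv_factorial_mul_Fenorm_powDefect_le ha ha')
  refine ⟨fun i j => ∑' m, E m i j, memF_iff_Fenorm_ne_top.2 (ne_top_of_le_ne_top hE
    (Fenorm_tsum_le E)), fun i j => ?_⟩
  have hsum := (hasSum_expW ha ((j : ℤ) - i)).add
    (summable_apply_of_tsum_Fenorm_ne_top hE i j).hasSum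
  refine (hsum.tendsto_sum_nat.congr fun k => Finset.sum_congr rfl fun m _ => ?_).comp
    (tendsto_add_atTop_nat 1)
  simp only [E, powDefect, Toep, Pi.sub_apply]
  ring
end
end
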